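/- Let γ > 2, λ₁ ≥ λ₂ > 0, 0 < Δ₁ ≤ λ₁, 0 < Δ₂ ≤ λ₂, and z ∈ ℝ, and define h(β) := (1/2)(β − z)² + Δ₁·g_{λ₁,γ}(β) + Δ₂·g_{λ₂,γ}(β). A point β̂ ∈ ℝ is the unique global minimizer of h if and only if there exist u₁, u₂ ∈ ℝ with 0 = −z + β̂ + Δ₁u₁ + Δ₂u₂, where for each i ∈ {1,2}: u_i = sgn(β̂)·max(1 − |β̂|/(λ_i γ), 0) if β̂ ≠ 0, and u_i ∈ [−1, 1] if β̂ = 0. (The KKT subgradient characterization of the coordinate-wise minimizer, equation (17) in the proof of Theorem 3.) -/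

import Mathlib

/-- derivative of `t ↦ max t 0 ^ 2` is `2 * max t 0`. -/
lemma maxsq_hasDerivAt (x : ℝ) : HasDerivAt (fun t : ℝ => max t 0 ^ 2) (2 * max x 0) x := by
  rcases lt_trichotomy x 0 with hx | hx | hx
  · have hev : (fun t : ℝ => max t 0 ^ 2) =ᶠ[nhds x] fun _ => 0 := by
      filter_upwards [Iio_mem_nhds hx] with t ht
      have ht' : t < 0 := ht
      simp [max_eq_right ht'.le]
    have h0 : HasDerivAt (fun _ : ℝ => (0:ℝ)) (2 * max x 0) x := by
      rw [max_eq_right hx.le]; simpa using hasDerivAt_const x (0:ℝ)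
    exact h0.congr_of_eventuallyEq hev
  · subst hx
    rw [max_self, mul_zero]
    rw [hasDerivAt_iff_isLittleO]
    rw [Asymptotics.isLittleO_iff]
    intro c hc
    have hev : ∀ᶠ t : ℝ in nhds 0, |t| ≤ c := by
      have := Metric.closedBall_mem_nhds (0:ℝ) hc
      filter_upwards [this] with t ht
      simpa [Real.dist_eq] using ht
    filter_upwards [hev] with t ht
    have h1 : max t 0 ^ 2 ≤ t ^ 2 := by
      rcases le_total t 0 with h | h
      · simp [max_eq_right h]; positivity
      · simp [max_eq_left h]
    have hb : ‖max t 0 ^ 2 - max (0:ℝ) 0 ^ 2 - (t - 0) • (0:ℝ)‖ = max t 0 ^ 2 := by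
      simp [abs_of_nonneg (by positivity : (0:ℝ) ≤ max t 0 ^ 2)]
    rw [hb]
    calc max t 0 ^ 2 ≤ t ^ 2 := h1
      _ = |t| * |t| := by rw [← abs_mul, ← sq, abs_of_nonneg (sq_nonneg t)]
      _ ≤ c * ‖t - 0‖ := by
          rw [sub_zero, Real.norm_eq_abs]
          exact mul_le_mul_of_nonneg_right ht (abs_nonneg t)
  · have hev : (fun t : ℝ => max t 0 ^ 2) =ᶠ[nhds x] fun t => t ^ 2 := by
      filter_upwards [Ioi_mem_nhds hx] with t ht
      have ht' : (0:ℝ) < t := ht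
      simp [max_eq_left ht'.le]
    have h0 : HasDerivAt (fun t : ℝ => t ^ 2) (2 * max x 0) x := by
      rw [max_eq_left hx.le]
      simpa using hasDerivAt_pow 2 x
    exact h0.congr_of_eventuallyEq hev
/-- The (scaled) MC+ inner penalty `g_{λ,γ}(β) = ∫_0^{|β|} max(1 − x/(λγ), 0) dx`. -/
noncomputable def mcPlus (lam gam b : ℝ) : ℝ :=
  ∫ x in (0 : ℝ)..|b|, max (1 - x / (lam * gam)) 0


lemma mcPlus_eq (lam gam b : ℝ) (ha : 0 < lam * gam) :
    mcPlus lam gam b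
      = |b| - b ^ 2 / (2 * (lam * gam)) + max (|b| - lam * gam) 0 ^ 2 / (2 * (lam * gam)) := by
  set a := lam * gam with hadef
  have hF : ∀ x : ℝ, HasDerivAt (fun x : ℝ => x - x ^ 2 / (2 * a) + max (x - a) 0 ^ 2 / (2 * a))
      (max (1 - x / a) 0) x := by
    intro x
    have h1 : HasDerivAt (fun x : ℝ => x - x ^ 2 / (2 * a)) (1 - 2 * x ^ 1 / (2 * a)) x :=
      (hasDerivAt_id x).sub ((hasDerivAt_pow 2 x).div_const (2 * a))
    have h2 : HasDerivAt (fun x : ℝ => max (x - a) 0 ^ 2) (2 * max (x - a) 0 * 1) x :=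
      by have := HasDerivAt.comp x (maxsq_hasDerivAt (x - a)) ((hasDerivAt_id x).sub_const a); exact this
    have h3 := h1.add (h2.div_const (2 * a))
    refine HasDerivAt.congr_deriv h3 ?_
    rcases le_total x a with h | h
    · rw [max_eq_left (by
        rw [sub_nonneg, div_le_one ha]; exact h : (0:ℝ) ≤ 1 - x / a),
        max_eq_right (by linarith : x - a ≤ 0)]
      field_simp
      ring
    · rw [max_eq_right (by
        rw [sub_nonpos, le_div_iff₀ ha]; linarith : 1 - x / a ≤ 0),
        max_eq_left (by linarith : (0:ℝ) ≤ x - a)]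
      field_simp
      ring
  have hint : IntervalIntegrable (fun x : ℝ => max (1 - x / a) 0) MeasureTheory.volume 0 |b| := by
    apply Continuous.intervalIntegrable
    exact (continuous_const.sub (continuous_id.div_const a)).max continuous_const
  rw [mcPlus, intervalIntegral.integral_eq_sub_of_hasDerivAt (fun x _ => hF x) hint]
  have h0 : max ((0:ℝ) - a) 0 = 0 := max_eq_right (by linarith)
  simp [h0, ha.le]

lemma sign_mul_self_eq_abs (b : ℝ) : Real.sign b * b = |b| := by
  rcases lt_trichotomy b 0 with h | h | h
  · rw [Real.sign_of_neg h, abs_of_neg h]; ring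
  · simp [h]
  · rw [Real.sign_of_pos h, abs_of_pos h]; ring

lemma abs_sign_le_one (b : ℝ) : |Real.sign b| ≤ 1 := by
  rcases Real.sign_apply_eq b with h | h | h <;> simp [h]

lemma sign_mul_abs_eq_self (b : ℝ) : Real.sign b * |b| = b := by
  rcases lt_trichotomy b 0 with h | h | h
  · rw [Real.sign_of_neg h, abs_of_neg h]; ring
  · simp [h]
  · rw [Real.sign_of_pos h, abs_of_pos h]; ring

lemma sign_identity (a b : ℝ) (ha : 0 < a) (_hb : b ≠ 0) :
    Real.sign b * max (1 - |b| / a) 0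
      = Real.sign b - b / a + Real.sign b * max (|b| - a) 0 / a := by
  have hs := sign_mul_self_eq_abs b
  have hs2 := sign_mul_abs_eq_self b
  rcases le_total |b| a with h | h
  · rw [max_eq_left (by rw [sub_nonneg, div_le_one ha]; exact h),
      max_eq_right (by linarith : |b| - a ≤ 0)]
    field_simp
    linear_combination -hs2
  · rw [max_eq_right (by rw [sub_nonpos, le_div_iff₀ ha]; linarith : 1 - |b| / a ≤ 0),
      max_eq_left (by linarith : (0:ℝ) ≤ |b| - a)]
    field_simp
    linear_combination -hs2

lemma abs_subgrad (v b c : ℝ) (hv : |v| ≤ 1) (hvb : v * b = |b|) :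
    |b| + v * (c - b) ≤ |c| := by
  have h : v * c ≤ |c| := by
    calc v * c ≤ |v * c| := le_abs_self _
      _ = |v| * |c| := abs_mul _ _
      _ ≤ 1 * |c| := mul_le_mul_of_nonneg_right hv (abs_nonneg c)
      _ = |c| := one_mul _
  nlinarith [hvb]

lemma maxsq_convex (a b c : ℝ) (ha : 0 < a) :
    max (|b| - a) 0 ^ 2 + 2 * (Real.sign b * max (|b| - a) 0) * (c - b)
      ≤ max (|c| - a) 0 ^ 2 := by
  by_cases h : |b| - a ≤ 0
  · rw [max_eq_right h]
    simpa using sq_nonneg (max (|c| - a) 0)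
  · push_neg at h
    have hb : b ≠ 0 := by
      intro h0; rw [h0] at h; simp at h; linarith
    have hP : max (|b| - a) 0 = |b| - a := max_eq_left (le_of_lt (by linarith))
    rw [hP]
    have hs := sign_mul_self_eq_abs b
    have hsc : Real.sign b * c ≤ |c| := by
      calc Real.sign b * c ≤ |Real.sign b * c| := le_abs_self _
        _ = |Real.sign b| * |c| := abs_mul _ _
        _ ≤ 1 * |c| := mul_le_mul_of_nonneg_right (abs_sign_le_one b) (abs_nonneg c)
        _ = |c| := one_mul _
    have hQ1 : |c| - a ≤ max (|c| - a) 0 := le_max_left _ _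
    have hQ0 : (0:ℝ) ≤ max (|c| - a) 0 := le_max_right _ _
    nlinarith [sq_nonneg (max (|c| - a) 0 - (|b| - a)), hs, hsc]

lemma pen_lower (a d v b c u : ℝ) (ha : 0 < a) (hd : 0 < d)
    (hv : |v| ≤ 1) (hvb : v * b = |b|)
    (hu : u = v + Real.sign b * max (|b| - a) 0 / a - b / a) :
    d * (|b| - b ^ 2 / (2 * a) + max (|b| - a) 0 ^ 2 / (2 * a)) + d * u * (c - b)
      - d * (c - b) ^ 2 / (2 * a)
      ≤ d * (|c| - c ^ 2 / (2 * a) + max (|c| - a) 0 ^ 2 / (2 * a)) := by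
  have h1 := abs_subgrad v b c hv hvb
  have h2 := maxsq_convex a b c ha
  subst hu
  have H1 : d * (|b| + v * (c - b)) ≤ d * |c| := mul_le_mul_of_nonneg_left h1 hd.le
  have H2 : d / (2 * a) * (max (|b| - a) 0 ^ 2 + 2 * (Real.sign b * max (|b| - a) 0) * (c - b))
      ≤ d / (2 * a) * max (|c| - a) 0 ^ 2 :=
    mul_le_mul_of_nonneg_left h2 (by positivity)
  have key : d * (Real.sign b * max (|b| - a) 0 / a) * (c - b)
      = d / (2 * a) * (2 * (Real.sign b * max (|b| - a) 0) * (c - b)) := by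
    field_simp
  have key2 : d * (b / a) * (c - b) + d * (c - b) ^ 2 / (2 * a)
      = d * (c ^ 2 / (2 * a)) - d * (b ^ 2 / (2 * a)) := by
    field_simp; ring
  ring_nf at H1 H2 key key2 ⊢
  linarith [H1, H2, key, key2]

set_option maxHeartbeats 2000000

/-- The KKT subgradient characterization (equation (17)) of the unique minimizer
of the majorized coordinate-wise objective
`h(β) = (1/2)(β − z)² + Δ₁·g_{λ₁,γ}(β) + Δ₂·g_{λ₂,γ}(β)`. -/
theorem kkt_characterization (gam l1 l2 d1 d2 z : ℝ)
    (hgam : 2 < gam) (hl2 : 0 < l2) (hl12 : l2 ≤ l1)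
    (hd1 : 0 < d1) (hd1' : d1 ≤ l1) (hd2 : 0 < d2) (hd2' : d2 ≤ l2)
    (bhat : ℝ) :
    (∀ β : ℝ, β ≠ bhat →
        1 / 2 * (bhat - z) ^ 2 + d1 * mcPlus l1 gam bhat + d2 * mcPlus l2 gam bhat
          < 1 / 2 * (β - z) ^ 2 + d1 * mcPlus l1 gam β + d2 * mcPlus l2 gam β)
      ↔ ∃ u1 u2 : ℝ,
          0 = -z + bhat + d1 * u1 + d2 * u2
          ∧ (bhat ≠ 0 → u1 = Real.sign bhat * max (1 - |bhat| / (l1 * gam)) 0)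
          ∧ (bhat = 0 → u1 ∈ Set.Icc (-1 : ℝ) 1)
          ∧ (bhat ≠ 0 → u2 = Real.sign bhat * max (1 - |bhat| / (l2 * gam)) 0)
          ∧ (bhat = 0 → u2 ∈ Set.Icc (-1 : ℝ) 1) := by
  have hgam0 : (0:ℝ) < gam := by linarith
  have hl1 : 0 < l1 := lt_of_lt_of_le hl2 hl12
  have ha1 : 0 < l1 * gam := by positivity
  have ha2 : 0 < l2 * gam := by positivity
  simp only [fun b => mcPlus_eq l1 gam b ha1, fun b => mcPlus_eq l2 gam b ha2]
  constructor
  · intro hmin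
    by_cases hb : bhat = 0
    · subst hb
      have hz : |z| ≤ d1 + d2 := by
        by_contra hzc
        push_neg at hzc
        set t := min (l2 * gam) (|z| - (d1 + d2)) with ht
        have ht0 : 0 < t := lt_min ha2 (by linarith)
        have ht1 : t ≤ |z| - (d1 + d2) := min_le_right _ _
        have ht2 : t ≤ l2 * gam := min_le_left _ _
        have ht3 : t ≤ l1 * gam := by nlinarith
        set β : ℝ := if 0 ≤ z then t else -t with hβdef
        have hβabs : |β| = t := by
          rcases le_or_gt 0 z with h | h
          · rw [hβdef, if_pos h, abs_of_pos ht0]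
          · rw [hβdef, if_neg (not_le.2 h), abs_of_neg (by linarith)]
            ring
        have hβz : β * z = t * |z| := by
          rcases le_or_gt 0 z with h | h
          · rw [hβdef, if_pos h, abs_of_nonneg h]
          · rw [hβdef, if_neg (not_le.2 h), abs_of_neg h]; ring
        have hβ2 : β ^ 2 = t ^ 2 := by
          rcases le_or_gt 0 z with h | h
          · rw [hβdef, if_pos h]
          · rw [hβdef, if_neg (not_le.2 h)]; ring
        have hβne : β ≠ 0 := by
          rcases le_or_gt 0 z with h | h
          · rw [hβdef, if_pos h]; exact ne_of_gt ht0
          · rw [hβdef, if_neg (not_le.2 h)]; exact ne_of_lt (by linarith)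
        have hH := hmin β hβne
        rw [hβabs] at hH
        have hm1 : max (t - l1 * gam) 0 = 0 := max_eq_right (by linarith)
        have hm2 : max (t - l2 * gam) 0 = 0 := max_eq_right (by linarith)
        rw [hm1, hm2] at hH
        have e1 : max (|(0:ℝ)| - l1 * gam) 0 = 0 := max_eq_right (by simp; linarith)
        have e2 : max (|(0:ℝ)| - l2 * gam) 0 = 0 := max_eq_right (by simp; linarith)
        rw [e1, e2] at hH
        simp only [abs_zero] at hH
        have hq1 : 0 ≤ β ^ 2 / (2 * (l1 * gam)) := by positivity
        have hq2 : 0 ≤ β ^ 2 / (2 * (l2 * gam)) := by positivity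
        ring_nf at hH hq1 hq2 hβ2 hβz
        nlinarith [hH, hq1, hq2, hβ2, hβz, ht0, ht1, mul_pos ht0 ht0]
      have hdd : (0:ℝ) < d1 + d2 := by linarith
      refine ⟨z / (d1 + d2), z / (d1 + d2), ?_, fun h => absurd rfl h, ?_, fun h => absurd rfl h, ?_⟩
      · field_simp
        ring
      · intro _
        rw [Set.mem_Icc, ← abs_le, abs_div, abs_of_pos hdd, div_le_one hdd]
        exact hz
      · intro _
        rw [Set.mem_Icc, ← abs_le, abs_div, abs_of_pos hdd, div_le_one hdd]
        exact hz
    · -- bhat ≠ 0 : derivative argument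
      have hsb : Real.sign bhat * bhat = |bhat| := sign_mul_self_eq_abs bhat
      have habs : HasDerivAt (fun x : ℝ => |x|) (Real.sign bhat) bhat := by
        rcases lt_trichotomy bhat 0 with h | h | h
        · rw [Real.sign_of_neg h]
          exact hasDerivAt_abs_neg h
        · exact absurd h hb
        · rw [Real.sign_of_pos h]
          exact hasDerivAt_abs_pos h
      have hM1 : HasDerivAt (fun x : ℝ => max (|x| - l1 * gam) 0 ^ 2)
          (2 * max (|bhat| - l1 * gam) 0 * Real.sign bhat) bhat :=
        by have := HasDerivAt.comp bhat (maxsq_hasDerivAt (|bhat| - l1 * gam)) (habs.sub_const (l1 * gam)); exact this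
      have hM2 : HasDerivAt (fun x : ℝ => max (|x| - l2 * gam) 0 ^ 2)
          (2 * max (|bhat| - l2 * gam) 0 * Real.sign bhat) bhat :=
        by have := HasDerivAt.comp bhat (maxsq_hasDerivAt (|bhat| - l2 * gam)) (habs.sub_const (l2 * gam)); exact this
      have hq : HasDerivAt (fun x : ℝ => 1 / 2 * (x - z) ^ 2)
          (1 / 2 * (2 * (bhat - z) ^ 1 * 1)) bhat :=
        (((hasDerivAt_id bhat).sub_const z).pow 2).const_mul (1/2)
      have hp1 : HasDerivAt (fun x : ℝ =>
            d1 * (|x| - x ^ 2 / (2 * (l1 * gam)) + max (|x| - l1 * gam) 0 ^ 2 / (2 * (l1 * gam))))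
          (d1 * (Real.sign bhat - 2 * bhat ^ 1 / (2 * (l1 * gam))
            + 2 * max (|bhat| - l1 * gam) 0 * Real.sign bhat / (2 * (l1 * gam)))) bhat :=
        ((habs.sub ((hasDerivAt_pow 2 bhat).div_const _)).add (hM1.div_const _)).const_mul d1
      have hp2 : HasDerivAt (fun x : ℝ =>
            d2 * (|x| - x ^ 2 / (2 * (l2 * gam)) + max (|x| - l2 * gam) 0 ^ 2 / (2 * (l2 * gam))))
          (d2 * (Real.sign bhat - 2 * bhat ^ 1 / (2 * (l2 * gam))
            + 2 * max (|bhat| - l2 * gam) 0 * Real.sign bhat / (2 * (l2 * gam)))) bhat :=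
        ((habs.sub ((hasDerivAt_pow 2 bhat).div_const _)).add (hM2.div_const _)).const_mul d2
      have hf := (hq.add hp1).add hp2
      have hloc : IsLocalMin (fun x : ℝ =>
          1 / 2 * (x - z) ^ 2
            + d1 * (|x| - x ^ 2 / (2 * (l1 * gam)) + max (|x| - l1 * gam) 0 ^ 2 / (2 * (l1 * gam)))
            + d2 * (|x| - x ^ 2 / (2 * (l2 * gam)) + max (|x| - l2 * gam) 0 ^ 2 / (2 * (l2 * gam)))) bhat := by
        apply Filter.Eventually.of_forall
        intro x
        by_cases hx : x = bhat
        · rw [hx]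
        · exact le_of_lt (hmin x hx)
      have hD0 := hloc.hasDerivAt_eq_zero hf
      refine ⟨Real.sign bhat * max (1 - |bhat| / (l1 * gam)) 0,
              Real.sign bhat * max (1 - |bhat| / (l2 * gam)) 0,
              ?_, fun _ => rfl, fun h => absurd h hb, fun _ => rfl, fun h => absurd h hb⟩
      rw [sign_identity (l1 * gam) bhat ha1 hb, sign_identity (l2 * gam) bhat ha2 hb]
      ring_nf at hD0 ⊢
      linarith [hD0]
  · rintro ⟨u1, u2, heq, h1n, h1z, h2n, h2z⟩ β hβ
    obtain ⟨v1, hv1, hvb1, hu1⟩ : ∃ v : ℝ, |v| ≤ 1 ∧ v * bhat = |bhat|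
        ∧ u1 = v + Real.sign bhat * max (|bhat| - l1 * gam) 0 / (l1 * gam) - bhat / (l1 * gam) := by
      by_cases hb : bhat = 0
      · refine ⟨u1, ?_, by simp [hb], by simp [hb, max_eq_right (neg_nonpos.2 ha1.le)]⟩
        have := h1z hb
        rw [Set.mem_Icc] at this
        exact abs_le.2 this
      · exact ⟨Real.sign bhat, abs_sign_le_one bhat, sign_mul_self_eq_abs bhat,
          by rw [h1n hb, sign_identity (l1 * gam) bhat ha1 hb]; ring⟩
    obtain ⟨v2, hv2, hvb2, hu2⟩ : ∃ v : ℝ, |v| ≤ 1 ∧ v * bhat = |bhat|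
        ∧ u2 = v + Real.sign bhat * max (|bhat| - l2 * gam) 0 / (l2 * gam) - bhat / (l2 * gam) := by
      by_cases hb : bhat = 0
      · refine ⟨u2, ?_, by simp [hb], by simp [hb, max_eq_right (neg_nonpos.2 ha2.le)]⟩
        have := h2z hb
        rw [Set.mem_Icc] at this
        exact abs_le.2 this
      · exact ⟨Real.sign bhat, abs_sign_le_one bhat, sign_mul_self_eq_abs bhat,
          by rw [h2n hb, sign_identity (l2 * gam) bhat ha2 hb]; ring⟩
    have G1 := pen_lower (l1 * gam) d1 v1 bhat β u1 ha1 hd1 hv1 hvb1 hu1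
    have G2 := pen_lower (l2 * gam) d2 v2 bhat β u2 ha2 hd2 hv2 hvb2 hu2
    have hc1 : d1 / (l1 * gam) ≤ 1 / gam := by
      rw [div_le_div_iff₀ ha1 hgam0]
      nlinarith [mul_le_mul_of_nonneg_right hd1' hgam0.le]
    have hc2 : d2 / (l2 * gam) ≤ 1 / gam := by
      rw [div_le_div_iff₀ ha2 hgam0]
      nlinarith [mul_le_mul_of_nonneg_right hd2' hgam0.le]
    have hginv : 1 / gam + 1 / gam < 1 := by
      rw [← add_div, div_lt_one hgam0]; linarith
    have hc : d1 / (l1 * gam) + d2 / (l2 * gam) < 1 := by linarith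
    have hsq : 0 < (β - bhat) ^ 2 := by
      have : β - bhat ≠ 0 := sub_ne_zero.2 hβ
      positivity
    have hpos : 0 < (1 - d1 / (l1 * gam) - d2 / (l2 * gam)) * (β - bhat) ^ 2 :=
      mul_pos (by linarith) hsq
    have heq' : (d1 * u1 + d2 * u2) * (β - bhat) = (z - bhat) * (β - bhat) := by
      have h0 : d1 * u1 + d2 * u2 = z - bhat := by linarith
      rw [h0]
    ring_nf at G1 G2 heq' hpos ⊢
    linarith [G1, G2, heq', hpos]
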